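/- Every contractible finite simple graph has Euler characteristic 1. -/
import Mathlib


open Finset
open scoped Classical

/-- Contractibility (in the sense of Ivashchenko) of the subgraph of `G` induced
on the vertex set `A`: a one-point graph is contractible, and `A` is
contractible if there is a vertex `v ∈ A` such that both the unit sphere of `v`
inside `A` (the neighbours of `v` lying in `A`) and `A` with `v` removed are
contractible.  The empty graph is not contractible. -/
inductive IsContractible {V : Type*} (G : SimpleGraph V) : Finset V → Prop
  | single (v : V) : IsContractible G {v}
  | step {A : Finset V} (v : V) (hv : v ∈ A)
      (hS : IsContractible G (A.filter (fun w => G.Adj v w)))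
      (hrest : IsContractible G (A.erase v)) : IsContractible G A

/-- The cliques of the graph `G` contained in the vertex set `A`. -/
noncomputable def cliquesOn {V : Type*} (G : SimpleGraph V) (A : Finset V) :
    Finset (Finset V) :=
  A.powerset.filter (fun s => s.Nonempty ∧ G.IsClique (s : Set V))

/-- Euler characteristic of the subgraph of `G` induced on `A`. -/
noncomputable def eulerCharOn {V : Type*} (G : SimpleGraph V) (A : Finset V) : ℤ :=
  ∑ s ∈ cliquesOn G A, (-1) ^ (s.card - 1)

lemma mem_cliquesOn {V : Type*} (G : SimpleGraph V) (A : Finset V) (s : Finset V) :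
    s ∈ cliquesOn G A ↔ s ⊆ A ∧ s.Nonempty ∧ G.IsClique (s : Set V) := by
  simp [cliquesOn]

lemma key {V : Type*} (G : SimpleGraph V) (A : Finset V) (v : V) (hv : v ∈ A) :
    eulerCharOn G A = eulerCharOn G (A.erase v)
      + (1 - eulerCharOn G (A.filter (fun w => G.Adj v w))) := by
  classical
  set S := A.filter (fun w => G.Adj v w) with hSdef
  have hvS : v ∉ S := by simp [hSdef]
  have hempty : (∅ : Finset V) ∉ cliquesOn G S := by
    simp [mem_cliquesOn]
  have hsplit := Finset.sum_filter_add_sum_filter_not (cliquesOn G A)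
    (fun s => v ∈ s) (fun s => (-1 : ℤ) ^ (s.card - 1))
  have h2 : (cliquesOn G A).filter (fun s => ¬ v ∈ s) = cliquesOn G (A.erase v) := by
    ext s
    simp only [Finset.mem_filter, mem_cliquesOn, Finset.subset_erase]
    tauto
  have h3 : ∑ s ∈ (cliquesOn G A).filter (fun s => v ∈ s), (-1 : ℤ) ^ (s.card - 1)
      = ∑ t ∈ insert ∅ (cliquesOn G S), (-1 : ℤ) ^ t.card := by
    refine Finset.sum_nbij' (fun s => s.erase v) (fun t => insert v t) ?_ ?_ ?_ ?_ ?_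
    · intro s hs
      simp only [Finset.mem_filter, mem_cliquesOn] at hs
      obtain ⟨⟨hsA, hne, hcl⟩, hvs⟩ := hs
      rcases eq_or_ne s {v} with rfl | hsv
      · simp
      · refine Finset.mem_insert_of_mem ?_
        rw [mem_cliquesOn]
        refine ⟨?_, ?_, hcl.subset (by exact_mod_cast Finset.erase_subset v s)⟩
        · intro w hw
          rw [Finset.mem_erase] at hw
          rw [hSdef, Finset.mem_filter]
          exact ⟨hsA hw.2, hcl hvs hw.2 (Ne.symm hw.1)⟩
        · rw [Finset.nonempty_iff_ne_empty]
          intro hcon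
          apply hsv
          have hcon' : s.erase v = ∅ := hcon
          have hc : s.card ≤ 1 := by
            have := Finset.card_erase_of_mem hvs
            rw [hcon'] at this
            simp at this
            omega
          exact (Finset.eq_of_subset_of_card_le (Finset.singleton_subset_iff.mpr hvs)
            (by simpa using hc)).symm
    · intro t ht
      simp only [Finset.mem_insert, mem_cliquesOn] at ht
      simp only [Finset.mem_filter, mem_cliquesOn]
      rcases ht with rfl | ⟨htS, htne, htcl⟩
      · simp [hv]
      · have htA : t ⊆ A := htS.trans (Finset.filter_subset _ _)
        refine ⟨⟨?_, ⟨v, Finset.mem_insert_self _ _⟩, ?_⟩, Finset.mem_insert_self _ _⟩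
        · exact Finset.insert_subset hv htA
        · rw [Finset.coe_insert]
          refine htcl.insert ?_
          intro b hb _
          have := htS hb
          rw [hSdef, Finset.mem_filter] at this
          exact this.2
    · intro s hs
      simp only [Finset.mem_filter] at hs
      exact Finset.insert_erase hs.2
    · intro t ht
      simp only [Finset.mem_insert, mem_cliquesOn] at ht
      have hvt : v ∉ t := by
        rcases ht with rfl | ⟨htS, _, _⟩
        · simp
        · exact fun hc => hvS (htS hc)
      exact Finset.erase_insert hvt
    · intro s hs
      simp only [Finset.mem_filter] at hs
      rw [Finset.card_erase_of_mem hs.2]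
  have h4 : ∑ t ∈ insert ∅ (cliquesOn G S), (-1 : ℤ) ^ t.card
      = 1 - eulerCharOn G S := by
    rw [Finset.sum_insert hempty]
    have : ∑ t ∈ cliquesOn G S, (-1 : ℤ) ^ t.card
        = - eulerCharOn G S := by
      rw [eulerCharOn, ← Finset.sum_neg_distrib]
      refine Finset.sum_congr rfl ?_
      intro t ht
      rw [mem_cliquesOn] at ht
      have h1 : t.card - 1 + 1 = t.card := Nat.succ_pred_eq_of_pos (Finset.card_pos.mpr ht.2.1)
      calc (-1 : ℤ) ^ t.card = (-1) ^ (t.card - 1 + 1) := by rw [h1]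
        _ = -(-1) ^ (t.card - 1) := by rw [pow_succ]; ring
    rw [this]; simp; ring
  unfold eulerCharOn
  rw [← hsplit, h2, h3, h4]
  unfold eulerCharOn
  ring

/-- Every contractible finite simple graph has Euler characteristic `1`. -/
theorem eulerChar_of_contractible {V : Type*} (G : SimpleGraph V)
(A : Finset V) (h : IsContractible G A) : eulerCharOn G A = 1 := by
  induction h with
  | single v =>
      have : cliquesOn G {v} = {{v}} := by
        ext s
        simp only [mem_cliquesOn, Finset.subset_singleton_iff, Finset.mem_singleton]
        constructor
        · rintro ⟨(rfl | rfl), hne, _⟩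
          · exact absurd hne (by simp)
          · rfl
        · rintro rfl
          exact ⟨Or.inr rfl, ⟨v, Finset.mem_singleton_self v⟩, by simp⟩
      rw [eulerCharOn, this]
      simp
  | step v hv hS hrest ihS ihrest =>
      rw [key G _ v hv, ihS, ihrest]
      ring
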